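/- arXiv:2008.10781 — 2 statements merged into one kernel-verified Lean document; each statement's English description precedes it below -/
import Mathlib

section
/- With the classifier R from the hitting-set construction, x_test the all-zeros vector, and x_dist the all-ones vector in {0,1}^m: for any subset A ⊆ {1,…,m}, the substituted sample x'(A) (equal to the indicator vector of A) satisfies R(x'(A)) = 1 if and only if A is a hitting set for Σ. Consequently, a minimum-cardinality A with R(x'(A)) = 1 has the same cardinality as a minimum hitting set for Σ. -/
/-- Substituting subset A into the all-zeros test vector from the all-ones distractor
gives the indicator vector of A; R(x'(A)) = 1 iff A is a hitting set for Σ, and hence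
the minimum cardinality of an A with R(x'(A)) = 1 equals the minimum cardinality of a
hitting set for Σ. -/
theorem stmt_5 (m n : ℕ) (hn : 0 < n)
    (S : Fin n → Finset (Fin m)) (hne : ∀ i, (S i).Nonempty) :
    let xp : Finset (Fin m) → (Fin m → ℝ) := fun A j => if j ∈ A then 1 else 0
    let R : (Fin m → ℝ) → ℝ := fun x =>
      ((Finset.univ.filter (fun i : Fin n => ∃ j ∈ S i, x j = 1)).card : ℝ) / n
    (∀ A : Finset (Fin m), R (xp A) = 1 ↔ ∀ i : Fin n, (A ∩ S i).Nonempty) ∧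
    sInf {k : ℕ | ∃ A : Finset (Fin m), A.card = k ∧ R (xp A) = 1}
      = sInf {k : ℕ | ∃ H : Finset (Fin m), H.card = k ∧ ∀ i : Fin n, (H ∩ S i).Nonempty} := by
  intro xp R
  have key : ∀ A : Finset (Fin m), R (xp A) = 1 ↔ ∀ i : Fin n, (A ∩ S i).Nonempty := by
    intro A
    have hpred : ∀ i : Fin n, (∃ j ∈ S i, xp A j = 1) ↔ (A ∩ S i).Nonempty := by
      intro i
      constructor
      · rintro ⟨j, hjS, hj⟩
        refine ⟨j, Finset.mem_inter.2 ⟨?_, hjS⟩⟩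
        simp only [xp] at hj
        by_contra h
        simp [h] at hj
      · rintro ⟨j, hj⟩
        rw [Finset.mem_inter] at hj
        exact ⟨j, hj.2, by simp [xp, hj.1]⟩
    have hn' : (n : ℝ) ≠ 0 := Nat.cast_ne_zero.2 hn.ne'
    simp only [R]
    rw [div_eq_one_iff_eq hn', Nat.cast_inj]
    constructor
    · intro hcard i
      have : Finset.univ.filter (fun i : Fin n => ∃ j ∈ S i, xp A j = 1) = Finset.univ :=
        Finset.eq_univ_of_card _ (by simpa [Fintype.card_fin] using hcard)
      have hi : i ∈ Finset.univ.filter (fun i : Fin n => ∃ j ∈ S i, xp A j = 1) := by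
        rw [this]; exact Finset.mem_univ i
      exact (hpred i).1 (Finset.mem_filter.1 hi).2
    · intro h
      have : Finset.univ.filter (fun i : Fin n => ∃ j ∈ S i, xp A j = 1) = Finset.univ := by
        apply Finset.eq_univ_of_forall
        intro i
        exact Finset.mem_filter.2 ⟨Finset.mem_univ i, (hpred i).2 (h i)⟩
      simp [this]
  refine ⟨key, ?_⟩
  congr 1
  ext k
  simp only [Set.mem_setOf_eq]
  exact exists_congr fun A => and_congr_right fun _ => key A
end

section
/- With R, x_test, x_dist as in the hitting-set construction, Σ has a hitting set of size at most k if and only if there exists a subset A ⊆ {1,…,m} with |A| ≤ k and R(x'(A)) = 1. -/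
/-- Σ has a hitting set of size at most k iff there is a subset A of size at most k
with R(x'(A)) = 1, where x'(A) is the indicator vector of A. -/
theorem stmt_6 (m n k : ℕ) (hn : 0 < n)
    (S : Fin n → Finset (Fin m)) (hne : ∀ i, (S i).Nonempty) :
    let xp : Finset (Fin m) → (Fin m → ℝ) := fun A j => if j ∈ A then 1 else 0
    let R : (Fin m → ℝ) → ℝ := fun x =>
      ((Finset.univ.filter (fun i : Fin n => ∃ j ∈ S i, x j = 1)).card : ℝ) / n
    ((∃ H : Finset (Fin m), H.card ≤ k ∧ ∀ i : Fin n, (H ∩ S i).Nonempty) ↔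
      (∃ A : Finset (Fin m), A.card ≤ k ∧ R (xp A) = 1)) := by
  intro xp R
  have hnR : (n : ℝ) ≠ 0 := Nat.cast_ne_zero.mpr hn.ne'
  have key : ∀ A : Finset (Fin m),
      (R (xp A) = 1 ↔ ∀ i : Fin n, (A ∩ S i).Nonempty) := by
    intro A
    have hpred : ∀ i : Fin n,
        (∃ j ∈ S i, xp A j = 1) ↔ (A ∩ S i).Nonempty := by
      intro i
      constructor
      · rintro ⟨j, hj, hx⟩
        refine ⟨j, Finset.mem_inter.mpr ⟨?_, hj⟩⟩
        by_contra h
        simp [xp, h] at hx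
      · rintro ⟨j, hj⟩
        rw [Finset.mem_inter] at hj
        exact ⟨j, hj.2, by simp [xp, hj.1]⟩
    simp only [R]
    rw [div_eq_one_iff_eq hnR]
    constructor
    · intro h i
      have : (Finset.univ.filter (fun i : Fin n => ∃ j ∈ S i, xp A j = 1)) =
          Finset.univ := by
        apply Finset.eq_univ_of_card
        have := h
        rw [show Fintype.card (Fin n) = n from Fintype.card_fin n]
        exact_mod_cast this
      have hi : i ∈ Finset.univ.filter (fun i : Fin n => ∃ j ∈ S i, xp A j = 1) := by
        rw [this]; exact Finset.mem_univ i
      exact (hpred i).mp (Finset.mem_filter.mp hi).2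
    · intro h
      have : (Finset.univ.filter (fun i : Fin n => ∃ j ∈ S i, xp A j = 1)) =
          Finset.univ := by
        apply Finset.filter_true_of_mem
        intro i _
        exact (hpred i).mpr (h i)
      rw [this]; simp
  constructor
  · rintro ⟨H, hcard, hH⟩
    exact ⟨H, hcard, (key H).mpr fun i => hH i⟩
  · rintro ⟨A, hcard, hA⟩
    exact ⟨A, hcard, fun i => (key A).mp hA i⟩
end
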